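/- Let c₀ > 0 and T ∈ (0,∞]. Suppose A, B : [0,T) → ℝ are differentiable and satisfy: B'(t) = 4 A(t) for all t ∈ [0,T); A'(t) ≥ 0 for all t ∈ [0,T); A'(t) ≥ (3/(8c₀)) B(t)² for all t ∈ [0,T) with B(t) ≥ 0; A(0) > 0; B(0) > 0; and 16 A(0)² ≥ B(0)³/c₀. Then T ≤ 2√c₀/√(B(0)); in particular, A and B cannot both be defined and differentiable on all of [0,∞). -/

import Mathlib

/-! The quantity `c₀ (4A)² − B³` is nondecreasing, since its derivative is
`4A (8c₀A' − 3B²) ≥ 0` once `A` and `B` are known to stay positive. So the initial condition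
`B³ ≤ c₀ (4A)²` persists, i.e. `B^{3/2} ≤ √c₀ B'`. For this Riccati-type inequality
`1/√B + t/(2√c₀)` is nonincreasing, and positivity of `1/√B` bounds every time `t` of existence
by `2√c₀/√B(0)`. -/

open Set

section IccDeriv

variable {f f' : ℝ → ℝ} {a b : ℝ}

lemma monotoneOn_Icc_of_hasDerivWithinAt_nonneg
    (hf : ∀ x ∈ Icc a b, HasDerivWithinAt f (f' x) (Icc a b) x)
    (hf' : ∀ x ∈ Ioo a b, 0 ≤ f' x) : MonotoneOn f (Icc a b) :=
  monotoneOn_of_hasDerivWithinAt_nonneg (convex_Icc a b)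
    (fun x hx => (hf x hx).continuousWithinAt)
    (by simpa only [interior_Icc] using
      fun x hx => (hf x (Ioo_subset_Icc_self hx)).mono Ioo_subset_Icc_self)
    (by rwa [interior_Icc])

lemma antitoneOn_Icc_of_hasDerivWithinAt_nonpos
    (hf : ∀ x ∈ Icc a b, HasDerivWithinAt f (f' x) (Icc a b) x)
    (hf' : ∀ x ∈ Ioo a b, f' x ≤ 0) : AntitoneOn f (Icc a b) :=
  antitoneOn_of_hasDerivWithinAt_nonpos (convex_Icc a b)
    (fun x hx => (hf x hx).continuousWithinAt)
    (by simpa only [interior_Icc] using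
      fun x hx => (hf x (Ioo_subset_Icc_self hx)).mono Ioo_subset_Icc_self)
    (by rwa [interior_Icc])

end IccDeriv

lemma sub_lt_of_mul_sqrt_le_mul_deriv {y y' : ℝ → ℝ} {a b k : ℝ} (hab : a ≤ b) (hk : 0 < k)
    (hy : ∀ s ∈ Icc a b, HasDerivWithinAt y (y' s) (Icc a b) s)
    (hpos : ∀ s ∈ Icc a b, 0 < y s) (hineq : ∀ s ∈ Ioo a b, y s * √(y s) ≤ k * y' s) :
    b - a < 2 * k / √(y a) := by
  have hanti : AntitoneOn (fun s => (√(y s))⁻¹ + s / (2 * k)) (Icc a b) := by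
    refine antitoneOn_Icc_of_hasDerivWithinAt_nonpos
      (f' := fun s => -(y' s / (2 * √(y s))) / √(y s) ^ 2 + 1 / (2 * k)) (fun s hs => ?_)
      (fun s hs => ?_)
    · have hsqrt := ((Real.hasDerivAt_sqrt (hpos s hs).ne').comp_hasDerivWithinAt s (hy s hs))
      rw [one_div, inv_mul_eq_div] at hsqrt
      exact (hsqrt.inv (Real.sqrt_pos.2 (hpos s hs)).ne').add
        ((hasDerivWithinAt_id s _).div_const _)
    · have hys := hpos s (Ioo_subset_Icc_self hs)
      have hsq : √(y s) ^ 2 = y s := Real.sq_sqrt hys.le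
      have : -(y' s / (2 * √(y s))) / √(y s) ^ 2 + 1 / (2 * k)
          = (y s * √(y s) - k * y' s) / (2 * k * y s * √(y s)) := by
        rw [hsq]; field_simp; ring
      rw [this]
      exact div_nonpos_of_nonpos_of_nonneg (by linarith [hineq s hs]) (by positivity)
  have hle := hanti (left_mem_Icc.2 hab) (right_mem_Icc.2 hab) hab
  have hyb : 0 < (√(y b))⁻¹ := inv_pos.2 (Real.sqrt_pos.2 (hpos b (right_mem_Icc.2 hab)))
  have hgap : (b - a) / (2 * k) < (√(y a))⁻¹ := by
    simp only at hle
    rw [sub_div]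
    linarith
  rwa [div_lt_iff₀ (by positivity), inv_mul_eq_div] at hgap

lemma mul_sqrt_self_le_sqrt_mul {x y c : ℝ} (hx : 0 ≤ x) (hy : 0 ≤ y) (hc : 0 ≤ c)
    (h : x ^ 3 ≤ c * y ^ 2) : x * √x ≤ √c * y := by
  rw [← sq_le_sq₀ (by positivity) (by positivity)]
  calc (x * √x) ^ 2 = x ^ 3 := by rw [mul_pow, Real.sq_sqrt hx]; ring
    _ ≤ c * y ^ 2 := h
    _ = (√c * y) ^ 2 := by rw [mul_pow, Real.sq_sqrt hc]

section

variable {A A' B : ℝ → ℝ} {a b c : ℝ}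

lemma monotoneOn_energy (hc : 0 < c)
    (hA : ∀ s ∈ Icc a b, HasDerivWithinAt A (A' s) (Icc a b) s)
    (hB : ∀ s ∈ Icc a b, HasDerivWithinAt B (4 * A s) (Icc a b) s)
    (hA_nonneg : ∀ s ∈ Ioo a b, 0 ≤ A s)
    (hA'_ge : ∀ s ∈ Ioo a b, 3 / (8 * c) * B s ^ 2 ≤ A' s) :
    MonotoneOn (fun s => c * (4 * A s) ^ 2 - B s ^ 3) (Icc a b) := by
  refine monotoneOn_Icc_of_hasDerivWithinAt_nonneg
    (f' := fun s => 4 * A s * (8 * c * A' s - 3 * B s ^ 2))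
    (fun s hs => ((((hA s hs).const_mul 4).pow 2).const_mul c |>.sub ((hB s hs).pow 3)).congr_deriv
      (by ring)) fun s hs => ?_
  have hB2 : 3 * B s ^ 2 ≤ 8 * c * A' s := by
    have := hA'_ge s hs
    rw [div_mul_eq_mul_div, div_le_iff₀ (by positivity)] at this
    linarith
  exact mul_nonneg (by linarith [hA_nonneg s hs]) (by linarith)

theorem sub_lt_two_mul_sqrt_div_sqrt_of_hasDerivWithinAt (hc : 0 < c) (hab : a ≤ b)
    (hA : ∀ s ∈ Icc a b, HasDerivWithinAt A (A' s) (Icc a b) s)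
    (hB : ∀ s ∈ Icc a b, HasDerivWithinAt B (4 * A s) (Icc a b) s)
    (hA'_nonneg : ∀ s ∈ Ioo a b, 0 ≤ A' s)
    (hA'_ge : ∀ s ∈ Ioo a b, 0 ≤ B s → 3 / (8 * c) * B s ^ 2 ≤ A' s)
    (hA₀ : 0 ≤ A a) (hB₀ : 0 < B a) (hinit : B a ^ 3 / c ≤ 16 * A a ^ 2) :
    b - a < 2 * √c / √(B a) := by
  have ha : a ∈ Icc a b := left_mem_Icc.2 hab
  have hA_nonneg : ∀ s ∈ Icc a b, 0 ≤ A s := fun s hs =>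
    hA₀.trans (monotoneOn_Icc_of_hasDerivWithinAt_nonneg hA hA'_nonneg ha hs hs.1)
  have hB_pos : ∀ s ∈ Icc a b, 0 < B s := fun s hs =>
    hB₀.trans_le (monotoneOn_Icc_of_hasDerivWithinAt_nonneg hB
      (fun r hr => by linarith [hA_nonneg r (Ioo_subset_Icc_self hr)]) ha hs hs.1)
  have henergy := monotoneOn_energy hc hA hB (fun s hs => hA_nonneg s (Ioo_subset_Icc_self hs))
    fun s hs => hA'_ge s hs (hB_pos s (Ioo_subset_Icc_self hs)).le
  have hcube : ∀ s ∈ Icc a b, B s ^ 3 ≤ c * (4 * A s) ^ 2 := fun s hs => by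
    have hinit' : B a ^ 3 ≤ c * (4 * A a) ^ 2 := by
      rw [div_le_iff₀ hc] at hinit
      linarith
    linarith [henergy ha hs hs.1]
  refine sub_lt_of_mul_sqrt_le_mul_deriv hab (Real.sqrt_pos.2 hc) hB hB_pos fun s hs => ?_
  have hs' := Ioo_subset_Icc_self hs
  exact mul_sqrt_self_le_sqrt_mul (hB_pos s hs').le (by linarith [hA_nonneg s hs']) hc.le
    (hcube s hs')

end

theorem stmt_11_general (c₀ : ℝ) (hc₀ : 0 < c₀) (T : EReal)
    (A B A' : ℝ → ℝ)
    (hB : ∀ t : ℝ, 0 ≤ t → (t : EReal) < T →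
      HasDerivWithinAt B (4 * A t) {s : ℝ | 0 ≤ s ∧ (s : EReal) < T} t)
    (hA : ∀ t : ℝ, 0 ≤ t → (t : EReal) < T →
      HasDerivWithinAt A (A' t) {s : ℝ | 0 ≤ s ∧ (s : EReal) < T} t)
    (hA'nonneg : ∀ t : ℝ, 0 ≤ t → (t : EReal) < T → 0 ≤ A' t)
    (hA'ineq : ∀ t : ℝ, 0 ≤ t → (t : EReal) < T → 0 ≤ B t →
      3 / (8 * c₀) * B t ^ 2 ≤ A' t)
    (hA0 : 0 < A 0) (hB0 : 0 < B 0)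
    (hinit : B 0 ^ 3 / c₀ ≤ 16 * A 0 ^ 2) :
    T ≤ ((2 * Real.sqrt c₀ / Real.sqrt (B 0) : ℝ) : EReal) := by
  have lifespan_lt : ∀ t : ℝ, 0 ≤ t → (t : EReal) < T → t < 2 * √c₀ / √(B 0) := by
    intro t ht htT
    have hsub : Icc 0 t ⊆ {s : ℝ | 0 ≤ s ∧ (s : EReal) < T} := fun s hs =>
      ⟨hs.1, (EReal.coe_le_coe_iff.2 hs.2).trans_lt htT⟩
    have hsub' : Ioo 0 t ⊆ {s : ℝ | 0 ≤ s ∧ (s : EReal) < T} := Ioo_subset_Icc_self.trans hsub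
    simpa using sub_lt_two_mul_sqrt_div_sqrt_of_hasDerivWithinAt hc₀ ht
      (fun s hs => (hA s (hsub hs).1 (hsub hs).2).mono hsub)
      (fun s hs => (hB s (hsub hs).1 (hsub hs).2).mono hsub)
      (fun s hs => hA'nonneg s (hsub' hs).1 (hsub' hs).2)
      (fun s hs => hA'ineq s (hsub' hs).1 (hsub' hs).2) hA0.le hB0 hinit
  by_contra! hlt
  exact lt_irrefl _ (lifespan_lt _ (by positivity) hlt)

/-- Let `c₀ > 0`, `T ∈ (0,∞]` and `A, B : [0,T) → ℝ` differentiable with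
`B' = 4A`, `A' ≥ 0`, `A' ≥ (3/(8c₀)) B²` whenever `B ≥ 0`, `A(0) > 0`, `B(0) > 0`, and
`16 A(0)² ≥ B(0)³/c₀`. Then `T ≤ 2√c₀/√(B(0))`. -/
theorem stmt_11 (c₀ : ℝ) (hc₀ : 0 < c₀) (T : EReal) (hT : 0 < T)
    (A B A' : ℝ → ℝ)
    (hB : ∀ t : ℝ, 0 ≤ t → (t : EReal) < T →
      HasDerivWithinAt B (4 * A t) {s : ℝ | 0 ≤ s ∧ (s : EReal) < T} t)
    (hA : ∀ t : ℝ, 0 ≤ t → (t : EReal) < T →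
      HasDerivWithinAt A (A' t) {s : ℝ | 0 ≤ s ∧ (s : EReal) < T} t)
    (hA'nonneg : ∀ t : ℝ, 0 ≤ t → (t : EReal) < T → 0 ≤ A' t)
    (hA'ineq : ∀ t : ℝ, 0 ≤ t → (t : EReal) < T → 0 ≤ B t →
      3 / (8 * c₀) * B t ^ 2 ≤ A' t)
    (hA0 : 0 < A 0) (hB0 : 0 < B 0)
    (hinit : B 0 ^ 3 / c₀ ≤ 16 * A 0 ^ 2) :
    T ≤ ((2 * Real.sqrt c₀ / Real.sqrt (B 0) : ℝ) : EReal) :=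
  stmt_11_general c₀ hc₀ T A B A' hB hA hA'nonneg hA'ineq hA0 hB0 hinit
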